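/- arXiv:2107.11940 — 6 statements merged into one kernel-verified Lean document; each statement's English description precedes it below -/
import Mathlib

section
/- Let (X,Γ) and (Y,Λ) be hyperbolic iterated function systems with attractors 𝔸 and 𝔹, and let (f,α): (X,Γ) → (Y,Λ) be a morphism. Then the attractor of the fibred system (X × Y, Γ ×_α Λ) is the graph gr(f|_𝔸) = {(x, f(x)) : x ∈ 𝔸}. -/
/-!
Both the graph of `f` over `A` and `D` are nonempty compact sets fixed by the Hutchinson operator
`S ↦ ⋃ i, (γ i × lam (α i)) '' S` of the fibred system. The graph is fixed because the graph map
`x ↦ (x, f x)` semiconjugates `γ i` to `γ i × lam (α i)`, which is exactly the morphism condition.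
The fibred maps are uniform contractions for the sup metric, so the Hutchinson operator contracts
the Hausdorff distance, and two of its fixed points at finite distance must coincide.
-/

open Metric Set

section Lipschitz

variable {α β γ δ : Type*} [PseudoEMetricSpace α] [PseudoEMetricSpace β]

theorem LipschitzWith.prodMap [PseudoEMetricSpace γ] [PseudoEMetricSpace δ]
    {f : α → β} {g : γ → δ} {Kf Kg : NNReal} (hf : LipschitzWith Kf f)
    (hg : LipschitzWith Kg g) : LipschitzWith (max Kf Kg) (Prod.map f g) := by
  have h := (hf.comp LipschitzWith.prod_fst).prodMk (hg.comp LipschitzWith.prod_snd)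
  rwa [mul_one, mul_one] at h

theorem exists_lipschitzWith_lt_one {ι : Type*} [Finite ι] {F : ι → α → β} {K : ι → NNReal}
    (hK : ∀ i, K i < 1) (hF : ∀ i, LipschitzWith (K i) (F i)) :
    ∃ C < 1, ∀ i, LipschitzWith C (F i) := by
  have := Fintype.ofFinite ι
  exact ⟨Finset.univ.sup K, (Finset.sup_lt_iff zero_lt_one).2 fun i _ => hK i,
    fun i => (hF i).weaken (Finset.le_sup (Finset.mem_univ i))⟩

theorem LipschitzWith.infEDist_image_le {F : α → β} {K : NNReal} (hF : LipschitzWith K F)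
    {t : Set α} (ht : t.Nonempty) (x : α) :
    infEDist (F x) (F '' t) ≤ K * infEDist x t := by
  have := ht.to_subtype
  simp only [infEDist, iInf_image]
  rw [iInf_subtype', iInf_subtype', ENNReal.mul_iInf (by simp)]
  exact iInf_mono fun y => hF x y

theorem LipschitzWith.hausdorffEDist_image_le {F : α → β} {K : NNReal} (hF : LipschitzWith K F)
    {s t : Set α} (hs : s.Nonempty) (ht : t.Nonempty) :
    hausdorffEDist (F '' s) (F '' t) ≤ K * hausdorffEDist s t := by
  refine hausdorffEDist_le_of_infEDist ?_ ?_
  · rintro _ ⟨x, hx, rfl⟩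
    calc infEDist (F x) (F '' t) ≤ K * infEDist x t := hF.infEDist_image_le ht x
      _ ≤ K * hausdorffEDist s t := by gcongr; exact infEDist_le_hausdorffEDist_of_mem hx
  · rintro _ ⟨x, hx, rfl⟩
    rw [hausdorffEDist_comm]
    calc infEDist (F x) (F '' s) ≤ K * infEDist x s := hF.infEDist_image_le hs x
      _ ≤ K * hausdorffEDist t s := by gcongr; exact infEDist_le_hausdorffEDist_of_mem hx

theorem LipschitzWith.hausdorffEDist_iUnion_image_le {ι : Type*} {F : ι → α → β} {K : NNReal}
    (hF : ∀ i, LipschitzWith K (F i)) {s t : Set α} (hs : s.Nonempty) (ht : t.Nonempty) :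
    hausdorffEDist (⋃ i, F i '' s) (⋃ i, F i '' t) ≤ K * hausdorffEDist s t :=
  hausdorffEDist_iUnion_le.trans (iSup_le fun i => (hF i).hausdorffEDist_image_le hs ht)

end Lipschitz

section Attractor

variable {ι Z : Type*}

structure IsAttractor [TopologicalSpace Z] (F : ι → Z → Z) (D : Set Z) : Prop where
  isCompact : IsCompact D
  nonempty : D.Nonempty
  eq_iUnion_image : D = ⋃ i, F i '' D

theorem IsAttractor.image {W : Type*} [TopologicalSpace Z] [TopologicalSpace W]
    {F : ι → Z → Z} {G : ι → W → W} {g : Z → W} (hg : Continuous g)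
    (hsemiconj : ∀ i, g ∘ F i = G i ∘ g) {D : Set Z} (hD : IsAttractor F D) :
    IsAttractor G (g '' D) where
  isCompact := hD.isCompact.image hg
  nonempty := hD.nonempty.image g
  eq_iUnion_image := by
    conv_lhs => rw [hD.eq_iUnion_image]
    simp only [image_iUnion, ← image_comp, hsemiconj]

theorem IsAttractor.eq [MetricSpace Z] {F : ι → Z → Z} {K : NNReal} (hK : K < 1)
    (hF : ∀ i, LipschitzWith K (F i)) {D E : Set Z} (hD : IsAttractor F D)
    (hE : IsAttractor F E) : D = E := by
  set e := hausdorffEDist D E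
  have he_ne_top : e ≠ ⊤ := hausdorffEDist_ne_top_of_nonempty_of_bounded hD.nonempty
    hE.nonempty hD.isCompact.isBounded hE.isCompact.isBounded
  have he_le : e ≤ K * e := by
    calc e = hausdorffEDist (⋃ i, F i '' D) (⋃ i, F i '' E) := by
          rw [← hD.eq_iUnion_image, ← hE.eq_iUnion_image]
      _ ≤ K * e := LipschitzWith.hausdorffEDist_iUnion_image_le hF hD.nonempty hE.nonempty
  have he_zero : e = 0 := by
    by_contra he_ne_zero
    have hlt : K * e < e := by
      simpa [mul_comm] using
        ENNReal.mul_lt_mul_right he_ne_zero he_ne_top (ENNReal.coe_lt_one_iff.2 hK)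
    exact hlt.not_ge he_le
  exact (hD.isCompact.isClosed.hausdorffEDist_zero_iff hE.isCompact.isClosed).1 he_zero

end Attractor

theorem graph_is_attractor_of_fibred_system_general
    {X Y : Type*} [MetricSpace X] [MetricSpace Y]
    {ι κ : Type*} [Fintype ι]
    (γ : ι → X → X) (r : ι → NNReal)
    (hr : ∀ i, r i < 1) (hγ : ∀ i, LipschitzWith (r i) (γ i))
    (lam : κ → Y → Y) (s : κ → NNReal)
    (hs : ∀ j, s j < 1) (hlam : ∀ j, LipschitzWith (s j) (lam j))
    (A : Set X) (hAc : IsCompact A) (hAne : A.Nonempty) (hAinv : A = ⋃ i, γ i '' A)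
    (f : X → Y) (hf : Continuous f) (α : ι → κ)
    (hmor : ∀ i, f ∘ γ i = lam (α i) ∘ f)
    (D : Set (X × Y)) (hDc : IsCompact D) (hDne : D.Nonempty)
    (hDinv : D = ⋃ i, (fun p : X × Y => (γ i p.1, lam (α i) p.2)) '' D) :
    D = {p : X × Y | p.1 ∈ A ∧ p.2 = f p.1} := by
  obtain ⟨K, hK, hfibred⟩ := exists_lipschitzWith_lt_one
    (fun i => max_lt (hr i) (hs (α i))) (fun i => (hγ i).prodMap (hlam (α i)))
  have hgraph : {p : X × Y | p.1 ∈ A ∧ p.2 = f p.1} = (fun x => (x, f x)) '' A := by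
    ext ⟨x, y⟩
    simp [eq_comm]
  have hsemiconj :
      ∀ i, (fun x => (x, f x)) ∘ γ i = Prod.map (γ i) (lam (α i)) ∘ fun x => (x, f x) :=
    fun i => funext fun x => Prod.ext rfl (congrFun (hmor i) x)
  rw [hgraph]
  exact IsAttractor.eq hK hfibred ⟨hDc, hDne, hDinv⟩
    (IsAttractor.image (continuous_id.prodMk hf) hsemiconj ⟨hAc, hAne, hAinv⟩)

theorem graph_is_attractor_of_fibred_system
    {X Y : Type*} [MetricSpace X] [CompleteSpace X] [MetricSpace Y] [CompleteSpace Y]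
    {ι κ : Type*} [Fintype ι] [Fintype κ]
    (γ : ι → X → X) (r : ι → NNReal)
    (hr : ∀ i, r i < 1) (hγ : ∀ i, LipschitzWith (r i) (γ i))
    (lam : κ → Y → Y) (s : κ → NNReal)
    (hs : ∀ j, s j < 1) (hlam : ∀ j, LipschitzWith (s j) (lam j))
    (A : Set X) (hAc : IsCompact A) (hAne : A.Nonempty) (hAinv : A = ⋃ i, γ i '' A)
    (B : Set Y) (hBc : IsCompact B) (hBne : B.Nonempty) (hBinv : B = ⋃ j, lam j '' B)
    (f : X → Y) (hf : Continuous f) (α : ι → κ)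
    (hmor : ∀ i, f ∘ γ i = lam (α i) ∘ f)
    (D : Set (X × Y)) (hDc : IsCompact D) (hDne : D.Nonempty)
    (hDinv : D = ⋃ i, (fun p : X × Y => (γ i p.1, lam (α i) p.2)) '' D) :
    D = {p : X × Y | p.1 ∈ A ∧ p.2 = f p.1} :=
  graph_is_attractor_of_fibred_system_general γ r hr hγ lam s hs hlam A hAc hAne hAinv f hf α hmor D
    hDc hDne hDinv
end

section
/- Let (X,Γ) and (Y,Λ) be hyperbolic IFSs with attractors 𝔸 and 𝔹, let β: Γ → Λ, and let 𝔻 be the attractor of the fibred system (X × Y, Γ ×_β Λ). If 𝔻 is the graph of a function g: 𝔸 → 𝔹, then g is continuous and (g,β) is a morphism from (𝔸,Γ) to (𝔹,Λ), i.e. g ∘ γ = β(γ) ∘ g on 𝔸 for all γ ∈ Γ. -/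
/-!
Projecting the fibred attractor `𝔻` to `Y` gives a compact set `g '' 𝔸` covered by its images
under the contractions `β(γ)`. The point of it farthest from the `Λ`-invariant closed set `𝔹` is
the image of a point no closer to `𝔹`, so contraction forces that largest distance to vanish,
and `g '' 𝔸 ⊆ 𝔹`. `g` is continuous on `𝔸` because the `g`-preimage of a closed set is the
projection of a compact piece of `𝔻`, and `g ∘ γ = β(γ) ∘ g` is the invariance of `𝔻` read off
in the graph.
-/

open Set Metric NNReal

theorem IsCompact.continuousOn_of_graphOn {X Y : Type*} [TopologicalSpace X] [T2Space X]
    [TopologicalSpace Y] {g : X → Y} {A : Set X} (h : IsCompact (A.graphOn g)) :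
    ContinuousOn g A := by
  refine continuousOn_iff_isClosed.2 fun C hC => ⟨Prod.fst '' (A.graphOn g ∩ univ ×ˢ C), ?_, ?_⟩
  · exact ((h.inter_right (isClosed_univ.prod hC)).image continuous_fst).isClosed
  · ext x
    aesop

theorem LipschitzWith.infDist_le_mul_of_mapsTo {Y : Type*} [PseudoMetricSpace Y] {f : Y → Y}
    {K : ℝ≥0} (hf : LipschitzWith K f) {B : Set Y} (hB : MapsTo f B B) (x : Y) :
    infDist (f x) B ≤ K * infDist x B := by
  rcases B.eq_empty_or_nonempty with rfl | hBne
  · simp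
  have := hBne.to_subtype
  rw [infDist_eq_iInf (x := x), Real.mul_iInf_of_nonneg K.coe_nonneg]
  refine le_ciInf fun y => ?_
  calc infDist (f x) B ≤ dist (f x) (f y) := infDist_le_dist_of_mem (hB y.2)
    _ ≤ K * dist x y := hf.dist_le_mul x y

theorem IsCompact.subset_of_subset_iUnion_image {Y ι : Type*} [PseudoMetricSpace Y]
    {f : ι → Y → Y} {K : ι → ℝ≥0} (hK : ∀ i, K i < 1) (hf : ∀ i, LipschitzWith (K i) (f i))
    {S B : Set Y} (hS : IsCompact S) (hSf : S ⊆ ⋃ i, f i '' S) (hB : IsClosed B)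
    (hBne : B.Nonempty) (hBf : ∀ i, MapsTo (f i) B B) : S ⊆ B := by
  rcases S.eq_empty_or_nonempty with rfl | hSne
  · exact empty_subset B
  obtain ⟨y₀, hy₀, hmax⟩ := hS.exists_isMaxOn hSne (continuous_infDist_pt B).continuousOn
  obtain ⟨i, y₁, hy₁, rfl⟩ := mem_iUnion.1 (hSf hy₀)
  have hcontract : infDist (f i y₁) B ≤ K i * infDist (f i y₁) B :=
    calc infDist (f i y₁) B ≤ K i * infDist y₁ B := (hf i).infDist_le_mul_of_mapsTo (hBf i) y₁
      _ ≤ K i * infDist (f i y₁) B := by gcongr; exact hmax hy₁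
  have hzero : infDist (f i y₁) B ≤ 0 := by
    have : (K i : ℝ) < 1 := by exact_mod_cast hK i
    nlinarith [infDist_nonneg (x := f i y₁) (s := B)]
  intro y hy
  exact (hB.mem_iff_infDist_zero hBne).2 (le_antisymm ((hmax hy).trans hzero) infDist_nonneg)

theorem graph_attractor_gives_morphism_general
    {X Y : Type*} [MetricSpace X] [MetricSpace Y]
    {ι κ : Type*}
    (γ : ι → X → X)
    (lam : κ → Y → Y) (s : κ → NNReal)
    (hs : ∀ j, s j < 1) (hlam : ∀ j, LipschitzWith (s j) (lam j))
    (A : Set X)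
    (B : Set Y) (hBc : IsCompact B) (hBne : B.Nonempty) (hBinv : B = ⋃ j, lam j '' B)
    (β : ι → κ)
    (D : Set (X × Y)) (hDc : IsCompact D)
    (hDinv : D = ⋃ i, (fun p : X × Y => (γ i p.1, lam (β i) p.2)) '' D)
    (g : X → Y) (hDgraph : D = (fun x => (x, g x)) '' A) :
    Set.MapsTo g A B ∧ ContinuousOn g A ∧
      ∀ i, ∀ x ∈ A, g (γ i x) = lam (β i) (g x) := by
  have hD : D = A.graphOn g := hDgraph
  have hgD : g '' A = Prod.snd '' D := by rw [hD, image_snd_graphOn]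
  have hcover : g '' A ⊆ ⋃ i, lam (β i) '' (g '' A) := by
    rw [hgD]
    conv_lhs => rw [hDinv]
    simp only [image_iUnion, image_image, subset_refl]
  have hBmaps : ∀ i, MapsTo (lam (β i)) B B := fun i y hy => by
    rw [hBinv]
    exact mem_iUnion.2 ⟨β i, mem_image_of_mem _ hy⟩
  refine ⟨mapsTo_iff_image_subset.2 ?_, (hD ▸ hDc).continuousOn_of_graphOn, fun i x hx => ?_⟩
  · exact (hgD ▸ hDc.image continuous_snd).subset_of_subset_iUnion_image (fun i => hs (β i))
      (fun i => hlam (β i)) hcover hBc.isClosed hBne hBmaps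
  · have hmem : (γ i x, lam (β i) (g x)) ∈ D := by
      rw [hDinv]
      exact mem_iUnion.2 ⟨i, (x, g x), hD ▸ ⟨x, hx, rfl⟩, rfl⟩
    exact (mem_graphOn.1 (hD ▸ hmem)).2

theorem graph_attractor_gives_morphism
    {X Y : Type*} [MetricSpace X] [CompleteSpace X] [MetricSpace Y] [CompleteSpace Y]
    {ι κ : Type*} [Fintype ι] [Fintype κ]
    (γ : ι → X → X) (r : ι → NNReal)
    (hr : ∀ i, r i < 1) (hγ : ∀ i, LipschitzWith (r i) (γ i))
    (lam : κ → Y → Y) (s : κ → NNReal)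
    (hs : ∀ j, s j < 1) (hlam : ∀ j, LipschitzWith (s j) (lam j))
    (A : Set X) (hAc : IsCompact A) (hAne : A.Nonempty) (hAinv : A = ⋃ i, γ i '' A)
    (B : Set Y) (hBc : IsCompact B) (hBne : B.Nonempty) (hBinv : B = ⋃ j, lam j '' B)
    (β : ι → κ)
    (D : Set (X × Y)) (hDc : IsCompact D) (hDne : D.Nonempty)
    (hDinv : D = ⋃ i, (fun p : X × Y => (γ i p.1, lam (β i) p.2)) '' D)
    (g : X → Y) (hDgraph : D = (fun x => (x, g x)) '' A) :
    Set.MapsTo g A B ∧ ContinuousOn g A ∧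
      ∀ i, ∀ x ∈ A, g (γ i x) = lam (β i) (g x) :=
  graph_attractor_gives_morphism_general γ lam s hs hlam A B hBc hBne hBinv β D hDc hDinv g hDgraph
end

section
/- Let (𝔸,Γ) and (𝔹,Λ) be hyperbolic iterated function systems whose underlying spaces are their own attractors. For f: 𝔸 → 𝔹 and α: Γ → Λ, the pair (f,α) is a morphism (f continuous and f ∘ γ = α(γ) ∘ f for all γ ∈ Γ) if and only if gr(f) = {(x,f(x)) : x ∈ 𝔸} is the attractor of the fibred system (𝔸 × 𝔹, Γ ×_α Λ). -/
/-!
Since `𝔸` is compact, `f` is continuous exactly when its graph is compact: the first projection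
restricted to a compact graph is a continuous bijection onto a Hausdorff space, hence a
homeomorphism, and `f` is the second projection composed with its inverse. The graph is invariant
under the fibred maps exactly when each `γ` is semiconjugated by `f` to `α γ`; the inclusion of the
graph in the union of its images uses that `𝔸` is covered by the images `γ(𝔸)`.
-/

open Function Set

section Graph

variable {X Y : Type*}

theorem continuous_of_isCompact_graph [TopologicalSpace X] [T2Space X] [TopologicalSpace Y]
    {f : X → Y} (hf : IsCompact {p : X × Y | p.2 = f p.1}) : Continuous f := by
  have : CompactSpace {p : X × Y | p.2 = f p.1} := isCompact_iff_compactSpace.mp hf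
  let e : {p : X × Y | p.2 = f p.1} ≃ X :=
    { toFun := fun p => p.1.1
      invFun := fun x => ⟨(x, f x), rfl⟩
      left_inv := fun p => Subtype.ext (Prod.ext rfl p.2.symm)
      right_inv := fun _ => rfl }
  let h := (continuous_fst.comp continuous_subtype_val).homeoOfEquivCompactToT2 (f := e)
  -- `h.symm x` is definitionally `⟨(x, f x), _⟩`
  exact continuous_snd.comp (continuous_subtype_val.comp h.symm.continuous)

theorem isCompact_graph_iff_continuous [TopologicalSpace X] [CompactSpace X] [T2Space X]
    [TopologicalSpace Y] {f : X → Y} :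
    IsCompact {p : X × Y | p.2 = f p.1} ↔ Continuous f := by
  refine ⟨continuous_of_isCompact_graph, fun hf => ?_⟩
  have hrange : {p : X × Y | p.2 = f p.1} = range fun x => (x, f x) := by
    ext ⟨x, y⟩
    simp [eq_comm]
  rw [hrange]
  exact isCompact_range (continuous_id.prodMk hf)

theorem mapsTo_graph_iff_semiconj {f : X → Y} {g : X → X} {h : Y → Y} :
    MapsTo (Prod.map g h) {p | p.2 = f p.1} {p | p.2 = f p.1} ↔ Semiconj f g h := by
  refine ⟨fun hmaps x => (hmaps (show (x, f x).2 = f (x, f x).1 from rfl)).symm, ?_⟩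
  rintro hfgh ⟨x, y⟩ (rfl : y = f x)
  exact (hfgh x).symm

theorem graph_eq_iUnion_image_iff {ι : Type*} {f : X → Y} {g : ι → X → X} {h : ι → Y → Y}
    (hg : ⋃ i, range (g i) = univ) :
    {p | p.2 = f p.1} = ⋃ i, Prod.map (g i) (h i) '' {p | p.2 = f p.1} ↔
      ∀ i, Semiconj f (g i) (h i) := by
  simp only [← mapsTo_graph_iff_semiconj]
  refine ⟨fun hinv i => ?_, fun hmaps => ?_⟩
  · rw [mapsTo_iff_image_subset]
    exact (subset_iUnion_of_subset i le_rfl).trans hinv.symm.subset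
  · refine Subset.antisymm ?_ (iUnion_subset fun i => (hmaps i).image_subset)
    rintro ⟨x, y⟩ (rfl : y = f x)
    obtain ⟨i, x, rfl⟩ := mem_iUnion.mp (hg.symm ▸ mem_univ x : x ∈ ⋃ i, range (g i))
    have hx : (x, f x) ∈ {p : X × Y | p.2 = f p.1} := rfl
    exact mem_iUnion.mpr ⟨i, (x, f x), hx, Prod.ext rfl (hmaps i hx)⟩

end Graph

theorem closed_graph_theorem_for_ifs_general
    {X Y : Type*} [MetricSpace X] [CompactSpace X]
    [MetricSpace Y]
    {ι κ : Type*}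
    (γ : ι → X → X)
    (lam : κ → Y → Y)
    (hXattr : (⋃ i, Set.range (γ i)) = Set.univ)
    (f : X → Y) (α : ι → κ) :
    (Continuous f ∧ ∀ i, f ∘ γ i = lam (α i) ∘ f) ↔
      (IsCompact {p : X × Y | p.2 = f p.1} ∧
        {p : X × Y | p.2 = f p.1} =
          ⋃ i, (fun p : X × Y => (γ i p.1, lam (α i) p.2)) ''
            {p : X × Y | p.2 = f p.1}) := by
  simp only [← semiconj_iff_comp_eq]
  exact and_congr isCompact_graph_iff_continuous.symm
    (graph_eq_iUnion_image_iff (h := fun i => lam (α i)) hXattr).symm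

theorem closed_graph_theorem_for_ifs
    {X Y : Type*} [MetricSpace X] [CompactSpace X] [Nonempty X]
    [MetricSpace Y] [CompactSpace Y]
    {ι κ : Type*} [Fintype ι] [Fintype κ]
    (γ : ι → X → X) (r : ι → NNReal)
    (hr : ∀ i, r i < 1) (hγ : ∀ i, LipschitzWith (r i) (γ i))
    (lam : κ → Y → Y) (s : κ → NNReal)
    (hs : ∀ j, s j < 1) (hlam : ∀ j, LipschitzWith (s j) (lam j))
    (hXattr : (⋃ i, Set.range (γ i)) = Set.univ)
    (hYattr : (⋃ j, Set.range (lam j)) = Set.univ)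
    (f : X → Y) (α : ι → κ) :
    (Continuous f ∧ ∀ i, f ∘ γ i = lam (α i) ∘ f) ↔
      (IsCompact {p : X × Y | p.2 = f p.1} ∧
        {p : X × Y | p.2 = f p.1} =
          ⋃ i, (fun p : X × Y => (γ i p.1, lam (α i) p.2)) ''
            {p : X × Y | p.2 = f p.1}) :=
  closed_graph_theorem_for_ifs_general γ lam hXattr f α
end

section
/- Let (X,Γ) and (Y,Λ) be hyperbolic IFSs with attractor 𝔸 of (X,Γ). If (f,α) and (g,α) are two morphisms from (X,Γ) to (Y,Λ) with the same map α: Γ → Λ, then f and g agree on 𝔸. -/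
/-!
The function `x ↦ dist (f x) (g x)` is continuous, so it attains its maximum on the compact
attractor at some point `γ i a`. The intertwining relations and the contraction `lam (α i)` give
`dist (f (γ i a)) (g (γ i a)) ≤ s (α i) * dist (f a) (g a)`, which is strictly below the maximum
unless the maximum is `0`.
-/

open NNReal

theorem LipschitzWith.dist_comp_le_of_comp_eq {X Y : Type*} [PseudoMetricSpace Y]
    {f g : X → Y} {γ : X → X} {μ : Y → Y} {s : ℝ≥0} (hμ : LipschitzWith s μ)
    (hf : f ∘ γ = μ ∘ f) (hg : g ∘ γ = μ ∘ g) (x : X) :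
    dist (f (γ x)) (g (γ x)) ≤ s * dist (f x) (g x) := by
  rw [← Function.comp_apply (f := f), ← Function.comp_apply (f := g), hf, hg]
  exact hμ.dist_le_mul _ _

theorem IsCompact.nonpos_of_forall_le_mul_comp {X ι : Type*} [TopologicalSpace X]
    {K : Set X} (hK : IsCompact K) {γ : ι → X → X} (hcover : K ⊆ ⋃ i, γ i '' K)
    {φ : X → ℝ} (hφ : ContinuousOn φ K) {c : ι → ℝ≥0} (hc : ∀ i, c i < 1)
    (hle : ∀ i, ∀ x ∈ K, φ (γ i x) ≤ c i * φ x) :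
    ∀ x ∈ K, φ x ≤ 0 := by
  intro x hx
  obtain ⟨x₀, hx₀, hmax⟩ := hK.exists_isMaxOn ⟨x, hx⟩ hφ
  refine (hmax hx).trans (not_lt.mp fun hpos => ?_)
  obtain ⟨i, a, ha, rfl⟩ := Set.mem_iUnion.mp (hcover hx₀)
  have hc1 : (c i : ℝ) < 1 := hc i
  refine lt_irrefl (φ (γ i a)) ?_
  calc φ (γ i a) ≤ c i * φ a := hle i a ha
    _ ≤ c i * φ (γ i a) := mul_le_mul_of_nonneg_left (hmax ha) (c i).coe_nonneg
    _ < φ (γ i a) := by nlinarith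

theorem morphism_rigidity_general
    {X Y : Type*} [MetricSpace X] [MetricSpace Y]
    {ι κ : Type*}
    (γ : ι → X → X)
    (lam : κ → Y → Y) (s : κ → NNReal)
    (hs : ∀ j, s j < 1) (hlam : ∀ j, LipschitzWith (s j) (lam j))
    (A : Set X) (hAc : IsCompact A) (hAinv : A = ⋃ i, γ i '' A)
    (f g : X → Y) (hf : Continuous f) (hg : Continuous g) (α : ι → κ)
    (hmorf : ∀ i, f ∘ γ i = lam (α i) ∘ f)
    (hmorg : ∀ i, g ∘ γ i = lam (α i) ∘ g) :
    ∀ x ∈ A, f x = g x := by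
  intro x hx
  have hdist_nonpos := hAc.nonpos_of_forall_le_mul_comp hAinv.subset (hf.dist hg).continuousOn
    (fun i => hs (α i))
    (fun i a _ => (hlam (α i)).dist_comp_le_of_comp_eq (hmorf i) (hmorg i) a) x hx
  exact dist_le_zero.mp hdist_nonpos

theorem morphism_rigidity
    {X Y : Type*} [MetricSpace X] [CompleteSpace X] [MetricSpace Y] [CompleteSpace Y]
    {ι κ : Type*} [Fintype ι] [Fintype κ]
    (γ : ι → X → X) (r : ι → NNReal)
    (hr : ∀ i, r i < 1) (hγ : ∀ i, LipschitzWith (r i) (γ i))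
    (lam : κ → Y → Y) (s : κ → NNReal)
    (hs : ∀ j, s j < 1) (hlam : ∀ j, LipschitzWith (s j) (lam j))
    (A : Set X) (hAc : IsCompact A) (hAne : A.Nonempty) (hAinv : A = ⋃ i, γ i '' A)
    (f g : X → Y) (hf : Continuous f) (hg : Continuous g) (α : ι → κ)
    (hmorf : ∀ i, f ∘ γ i = lam (α i) ∘ f)
    (hmorg : ∀ i, g ∘ γ i = lam (α i) ∘ g) :
    ∀ x ∈ A, f x = g x :=
  morphism_rigidity_general γ lam s hs hlam A hAc hAinv f g hf hg α hmorf hmorg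
end

section
/- Let (𝔸,Γ) and (𝔹,Λ) be hyperbolic IFSs equal to their attractors, with enumerations Γ = {γ₁,…,γ_N}, Λ = {λ₁,…,λ_M}, code maps π_Γ: Ω_N → 𝔸 and π_Λ: Ω_M → 𝔹, and a morphism (f,α): (𝔸,Γ) → (𝔹,Λ). Define h: {1,…,N} → {1,…,M} by α(γ_i) = λ_{h(i)} and let f̃: Ω_N → Ω_M apply h coordinatewise. Then f ∘ π_Γ = π_Λ ∘ f̃. -/
/-!
Both `f ∘ π_Γ` and `π_Λ ∘ f̃` satisfy the same self-similarity equation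
`g (i w) = λ_{h i} (g w)` on `Ω_N`. Since the `λ_j` are contractions with a common ratio `c < 1`
and `𝔹` is bounded, iterating this equation `n` times shows that the two maps are at distance
at most `diam 𝔹 · cⁿ` everywhere, hence equal.
-/

/-- The prepending map `σ_i : w ↦ iw` on the code space. -/
def prependMap {N : ℕ} (i : Fin N) (w : ℕ → Fin N) : ℕ → Fin N :=
  fun n => Nat.casesOn n i w

open NNReal

theorem prependMap_head_tail {N : ℕ} (w : ℕ → Fin N) :
    prependMap (w 0) (fun n => w (n + 1)) = w := by
  funext n
  cases n <;> rfl

theorem exists_lipschitzWith_lt_one_s16 {ι Y : Type*} [Finite ι] [PseudoEMetricSpace Y]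
    (μ : ι → Y → Y) (K : ι → ℝ≥0) (hK : ∀ i, K i < 1) (hμ : ∀ i, LipschitzWith (K i) (μ i)) :
    ∃ c < 1, ∀ i, LipschitzWith c (μ i) := by
  cases nonempty_fintype ι
  refine ⟨Finset.univ.sup K, (Finset.sup_lt_iff zero_lt_one).2 fun i _ => hK i, fun i => ?_⟩
  exact (hμ i).weaken (Finset.le_sup (Finset.mem_univ i))

section CodeSemiconjugacy

variable {α Y : Type*} {μ : α → Y → Y} {c : ℝ≥0} {g₁ g₂ : (ℕ → α) → Y}

theorem dist_le_mul_pow_of_head_tail [PseudoMetricSpace Y] (hμ : ∀ a, LipschitzWith c (μ a))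
    (h₁ : ∀ w, g₁ w = μ (w 0) (g₁ fun n => w (n + 1)))
    (h₂ : ∀ w, g₂ w = μ (w 0) (g₂ fun n => w (n + 1)))
    {C : ℝ} (hC : ∀ w, dist (g₁ w) (g₂ w) ≤ C) (n : ℕ) (w : ℕ → α) :
    dist (g₁ w) (g₂ w) ≤ C * c ^ n := by
  induction n generalizing w with
  | zero => simpa using hC w
  | succ n ih =>
    rw [h₁, h₂]
    calc dist (μ (w 0) _) (μ (w 0) _)
        ≤ c * dist (g₁ fun n => w (n + 1)) (g₂ fun n => w (n + 1)) := (hμ _).dist_le_mul _ _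
      _ ≤ c * (C * c ^ n) := by gcongr; exact ih _
      _ = C * c ^ (n + 1) := by ring

theorem eq_of_head_tail_of_dist_le [MetricSpace Y] (hc : c < 1)
    (hμ : ∀ a, LipschitzWith c (μ a))
    (h₁ : ∀ w, g₁ w = μ (w 0) (g₁ fun n => w (n + 1)))
    (h₂ : ∀ w, g₂ w = μ (w 0) (g₂ fun n => w (n + 1)))
    {C : ℝ} (hC : ∀ w, dist (g₁ w) (g₂ w) ≤ C) : g₁ = g₂ := by
  funext w
  have hlim : Filter.Tendsto (fun n : ℕ => C * (c : ℝ) ^ n) Filter.atTop (nhds 0) := by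
    simpa using (tendsto_pow_atTop_nhds_zero_of_lt_one c.coe_nonneg hc).const_mul C
  exact dist_le_zero.1 <|
    ge_of_tendsto' hlim (dist_le_mul_pow_of_head_tail hμ h₁ h₂ hC · w)

end CodeSemiconjugacy

theorem morphism_lifts_to_code_spaces_general
    {X Y : Type*} [MetricSpace Y] [CompactSpace Y]
    {N M : ℕ}
    (γ : Fin N → X → X)
    (lam : Fin M → Y → Y) (s : Fin M → NNReal)
    (hs : ∀ j, s j < 1) (hlam : ∀ j, LipschitzWith (s j) (lam j))
    (πΓ : (ℕ → Fin N) → X)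
    (hπΓ : ∀ (i : Fin N) (w : ℕ → Fin N), πΓ (prependMap i w) = γ i (πΓ w))
    (πΛ : (ℕ → Fin M) → Y)
    (hπΛ : ∀ (j : Fin M) (w : ℕ → Fin M), πΛ (prependMap j w) = lam j (πΛ w))
    (f : X → Y) (h : Fin N → Fin M)
    (hmor : ∀ i, f ∘ γ i = lam (h i) ∘ f) :
    f ∘ πΓ = πΛ ∘ (fun w : ℕ → Fin N => h ∘ w) := by
  obtain ⟨c, hc, hlamc⟩ := exists_lipschitzWith_lt_one_s16 lam s hs hlam
  have hlhs : ∀ w, (f ∘ πΓ) w = lam (h (w 0)) ((f ∘ πΓ) fun n => w (n + 1)) := fun w => by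
    conv_lhs => rw [← prependMap_head_tail w]
    rw [Function.comp_apply, hπΓ]
    exact congrFun (hmor _) _
  have hrhs : ∀ w : ℕ → Fin N,
      (πΛ ∘ (h ∘ ·)) w = lam (h (w 0)) ((πΛ ∘ (h ∘ ·)) fun n => w (n + 1)) := fun w => by
    conv_lhs => rw [Function.comp_apply, ← prependMap_head_tail (h ∘ w)]
    exact hπΛ _ _
  exact eq_of_head_tail_of_dist_le hc (fun i => hlamc (h i)) hlhs hrhs
    fun _ => Metric.dist_le_diam_of_mem BoundedSpace.bounded_univ trivial trivial

theorem morphism_lifts_to_code_spaces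
    {X Y : Type*} [MetricSpace X] [CompactSpace X] [MetricSpace Y] [CompactSpace Y]
    {N M : ℕ}
    (γ : Fin N → X → X) (r : Fin N → NNReal)
    (hr : ∀ i, r i < 1) (hγ : ∀ i, LipschitzWith (r i) (γ i))
    (lam : Fin M → Y → Y) (s : Fin M → NNReal)
    (hs : ∀ j, s j < 1) (hlam : ∀ j, LipschitzWith (s j) (lam j))
    (hXattr : (⋃ i, Set.range (γ i)) = Set.univ)
    (hYattr : (⋃ j, Set.range (lam j)) = Set.univ)
    (πΓ : (ℕ → Fin N) → X) (hπΓc : Continuous πΓ)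
    (hπΓ : ∀ (i : Fin N) (w : ℕ → Fin N), πΓ (prependMap i w) = γ i (πΓ w))
    (πΛ : (ℕ → Fin M) → Y) (hπΛc : Continuous πΛ)
    (hπΛ : ∀ (j : Fin M) (w : ℕ → Fin M), πΛ (prependMap j w) = lam j (πΛ w))
    (f : X → Y) (hf : Continuous f) (h : Fin N → Fin M)
    (hmor : ∀ i, f ∘ γ i = lam (h i) ∘ f) :
    f ∘ πΓ = πΛ ∘ (fun w : ℕ → Fin N => h ∘ w) :=
  morphism_lifts_to_code_spaces_general γ lam s hs hlam πΓ hπΓ πΛ hπΛ f h hmor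
end

section
/- Consider the IFSs on [0,1] given by Γ = {γ₁, γ₂} with γ₁(x) = 2x/3, γ₂(x) = 2x/3 + 1/3, and Λ = {λ₁, λ₂} with λ₁(x) = 3x/4, λ₂(x) = 3x/4 + 1/4. Then both systems have attractor [0,1], and there is no homeomorphism f: [0,1] → [0,1] and bijection α: Γ → Λ such that f ∘ γ = α(γ) ∘ f for both γ ∈ Γ; i.e. the two systems are not topologically conjugate. -/
/-!
The fixed points `0` of `γ₁` and `1` of `γ₂` must go to the fixed points `0` of `λ₁` and `1` of
`λ₂` (swapped if the conjugacy swaps the maps). The second iterates then tell the systems apart: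
`γ₁ γ₁ 1 = 4/9 < 5/9 = γ₂ γ₂ 0`, whereas `λ₁ λ₁ 1 = 9/16 > 7/16 = λ₂ λ₂ 0`, so the conjugacy
would reverse the order of one pair of points while preserving that of the endpoints, which a
continuous injective map of `[0, 1]` cannot do. A conjugacy swapping the maps becomes one
preserving them after composing with `x ↦ 1 - x`, which conjugates `λ₁` to `λ₂`.
-/

open Set

theorem Icc_zero_one_eq_image_union_image {r : ℝ} (hr : 1 / 2 ≤ r) (hr1 : r ≤ 1) :
    Icc (0:ℝ) 1 = (fun x => r * x) '' Icc 0 1 ∪ (fun x => r * x + (1 - r)) '' Icc 0 1 := by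
  have hr0 : 0 < r := by linarith
  have hleft : (fun x => r * x) '' Icc (0:ℝ) 1 = Icc 0 r := by
    simp [image_mul_left_Icc' hr0]
  rw [hleft, image_affine_Icc' hr0, Icc_union_Icc' (by linarith) (by linarith)]
  simp [min_eq_left (by linarith : (0:ℝ) ≤ 1 - r), max_eq_right hr1]

theorem ContinuousOn.mul_sub_pos_of_injOn_Icc {f : ℝ → ℝ} {a b x y : ℝ}
    (hc : ContinuousOn f (Icc a b)) (hi : InjOn f (Icc a b))
    (hax : a ≤ x) (hxy : x < y) (hyb : y ≤ b) :
    0 < (f b - f a) * (f y - f x) := by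
  have hab : a < b := by linarith
  have hx : x ∈ Icc a b := ⟨hax, by linarith⟩
  have hy : y ∈ Icc a b := ⟨by linarith, hyb⟩
  have ha : a ∈ Icc a b := left_mem_Icc.2 hab.le
  have hb : b ∈ Icc a b := right_mem_Icc.2 hab.le
  rcases hc.strictMonoOn_of_injOn_Icc' hab.le hi with hmono | hanti
  · exact mul_pos (sub_pos.2 (hmono ha hb hab)) (sub_pos.2 (hmono hx hy hxy))
  · exact mul_pos_of_neg_of_neg (sub_neg.2 (hanti ha hb hab)) (sub_neg.2 (hanti hx hy hxy))

/-- `f ∘ γ₁ = λ₁ ∘ f` and `f ∘ γ₂ = λ₂ ∘ f` on `[0, 1]`. -/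
def Intertwines (f : ℝ → ℝ) : Prop :=
  ∀ x ∈ Icc (0:ℝ) 1,
    f (2 * x / 3) = 3 * f x / 4 ∧ f (2 * x / 3 + 1 / 3) = 3 * f x / 4 + 1 / 4

namespace Intertwines

variable {f : ℝ → ℝ}

theorem values (hf : Intertwines f) :
    f 0 = 0 ∧ f 1 = 1 ∧ f (4 / 9) = 9 / 16 ∧ f (5 / 9) = 7 / 16 := by
  obtain ⟨h0, h13⟩ := hf 0 (by norm_num)
  obtain ⟨h23, h1⟩ := hf 1 (by norm_num)
  obtain ⟨h49, -⟩ := hf (2 / 3) (by norm_num)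
  obtain ⟨-, h59⟩ := hf (1 / 3) (by norm_num)
  norm_num at h0 h13 h23 h1 h49 h59
  exact ⟨by linarith, by linarith, by linarith, by linarith⟩

theorem one_sub_of_swapped (hf : ∀ x ∈ Icc (0:ℝ) 1,
      f (2 * x / 3) = 3 * f x / 4 + 1 / 4 ∧ f (2 * x / 3 + 1 / 3) = 3 * f x / 4) :
    Intertwines (fun x => 1 - f x) := by
  intro x hx
  obtain ⟨h₁, h₂⟩ := hf x hx
  constructor <;> linarith

theorem not_injOn (hf : Intertwines f) (hc : ContinuousOn f (Icc 0 1)) :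
    ¬ InjOn f (Icc 0 1) := by
  intro hi
  have hpos := hc.mul_sub_pos_of_injOn_Icc hi (x := 4 / 9) (y := 5 / 9)
    (by norm_num) (by norm_num) (by norm_num)
  obtain ⟨h0, h1, h49, h59⟩ := hf.values
  rw [h0, h1, h49, h59] at hpos
  norm_num at hpos

end Intertwines

theorem interval_systems_not_conjugate :
    (Icc (0:ℝ) 1 = (fun x => 2 * x / 3) '' Icc (0:ℝ) 1 ∪
        (fun x => 2 * x / 3 + 1 / 3) '' Icc (0:ℝ) 1) ∧
    (Icc (0:ℝ) 1 = (fun x => 3 * x / 4) '' Icc (0:ℝ) 1 ∪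
        (fun x => 3 * x / 4 + 1 / 4) '' Icc (0:ℝ) 1) ∧
    ¬ ∃ f : ℝ → ℝ, ContinuousOn f (Icc (0:ℝ) 1) ∧
        Set.BijOn f (Icc (0:ℝ) 1) (Icc (0:ℝ) 1) ∧
        ((∀ x ∈ Icc (0:ℝ) 1,
            f (2 * x / 3) = 3 * f x / 4 ∧
            f (2 * x / 3 + 1 / 3) = 3 * f x / 4 + 1 / 4) ∨
         (∀ x ∈ Icc (0:ℝ) 1,
            f (2 * x / 3) = 3 * f x / 4 + 1 / 4 ∧
            f (2 * x / 3 + 1 / 3) = 3 * f x / 4)) := by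
  refine ⟨?_, ?_, ?_⟩
  · convert Icc_zero_one_eq_image_union_image (r := 2 / 3) (by norm_num) (by norm_num) using 3 <;>
      ring
  · convert Icc_zero_one_eq_image_union_image (r := 3 / 4) (by norm_num) (by norm_num) using 3 <;>
      ring
  · rintro ⟨f, hc, hbij, hpres | hswap⟩
    · exact Intertwines.not_injOn hpres hc hbij.injOn
    · refine (Intertwines.one_sub_of_swapped hswap).not_injOn (continuousOn_const.sub hc) ?_
      exact fun x hx y hy hxy => hbij.injOn hx hy (by linarith)
end
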